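/- arXiv:1506.02047 — 4 statements merged into one kernel-verified Lean document; each statement's English description precedes it below -/
import Mathlib

section
/- Let F = F_p be a prime finite field, f : F^n → F a polynomial of total degree at most d, k ∈ ℕ, and z = (z_1, …, z_k) ∈ (F^n)^k. For a ∈ F^k write a·z = Σ_{i=1}^k a_i z_i ∈ F^n and |a| = Σ_{i=1}^k |a_i|, where |·| : F → {0, 1, …, p−1} is the natural map. Let B = {b ∈ F^k : |b| ≤ d}. Then for every a ∈ F^k there exist coefficients λ_{a,b} ∈ F (b ∈ B) such that D_{a·z} f(x) = Σ_{b ∈ B} λ_{a,b} · D_{b·z} f(x) for all x ∈ F^n. -/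
/-!
Write `D_a = Δ_[a·z]` and let `e_i` be the unit vectors of `F^k`. For any steps `u, v`,
`Δ_[u + v] = Δ_[u] + Δ_[v] + Δ_[v] Δ_[u]`; with `u = z_i` this writes `D_{e_i + a} f` through
`D_{e_i} f`, `D_a f` and `D_a (Δ_[z_i] f)`. A forward difference lowers the degree, since
`P(X + h) - P(X)` has no monomial of top degree, so induction on `d` puts `D_a (Δ_[z_i] f)` in the
span of the `D_b (Δ_[z_i] f)` with `|b| ≤ d - 1`, and the same identity rewrites each of those
through `D_{e_i + b} f`, `D_{e_i} f` and `D_b f`, all with `|·| ≤ d`. The `e_i` generate `F^k` as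
an additive monoid, so induction on `a` concludes.
-/

/-- `f : F^n → F` is a polynomial function of total degree at most `d`. -/
def IsPolyDeg {F : Type} [CommSemiring F] {n : ℕ} (d : ℕ) (f : (Fin n → F) → F) : Prop :=
  ∃ P : MvPolynomial (Fin n) F, P.totalDegree ≤ d ∧ ∀ x, f x = MvPolynomial.eval x P

open MvPolynomial fwdDiff

namespace MvPolynomial

variable {σ R : Type*} [CommRing R]

theorem totalDegree_mul_X {p : MvPolynomial σ R} (hp : p ≠ 0) (i : σ) :
    (p * X i).totalDegree = p.totalDegree + 1 := by
  have sum_add_single (m : σ →₀ ℕ) :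
      ((m + Finsupp.single i 1).sum fun _ e => e) = (m.sum fun _ e => e) + 1 := by
    rw [Finsupp.sum_add_index' (fun _ => rfl) (fun _ _ _ => rfl), Finsupp.sum_single_index rfl]
  rw [totalDegree, totalDegree, support_mul_X, Finset.sup_map,
    Finset.sup_add (support_nonempty.2 hp)]
  simp only [Function.comp_def, addRightEmbedding_apply, sum_add_single]

theorem totalDegree_X_add_C_le (i : σ) (c : R) : (X i + C c : MvPolynomial σ R).totalDegree ≤ 1 :=
  (totalDegree_add _ _).trans <| max_le
    ((totalDegree_monomial_le _ _).trans (by simp)) ((totalDegree_C c).trans_le zero_le_one)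

noncomputable def translate (h : σ → R) : MvPolynomial σ R →ₐ[R] MvPolynomial σ R :=
  aeval fun i => X i + C (h i)

theorem eval_translate (h x : σ → R) (P : MvPolynomial σ R) :
    eval x (translate h P) = eval (x + h) P := by
  induction P using MvPolynomial.induction_on <;> simp_all [translate]

theorem translate_monomial_sub_eq_zero_or_totalDegree_lt (h : σ → R) (s : σ →₀ ℕ) (a : R) :
    translate h (monomial s a) - monomial s a = 0 ∨
      (translate h (monomial s a) - monomial s a).totalDegree < (monomial s a).totalDegree := by
  refine induction_on_monomial (motive := fun p => translate h p - p = 0 ∨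
    (translate h p - p).totalDegree < p.totalDegree) (fun c => by simp [translate]) ?_ s a
  intro p i hp
  rcases eq_or_ne p 0 with rfl | hp0
  · simp
  right
  have hdiff : ((translate h p - p) * (X i + C (h i))).totalDegree ≤ p.totalDegree := by
    rcases hp with hp | hp
    · simp [hp]
    · exact (totalDegree_mul _ _).trans (by have := totalDegree_X_add_C_le i (h i); omega)
  have hconst : (p * C (h i)).totalDegree ≤ p.totalDegree :=
    (totalDegree_mul _ _).trans (by simp)
  calc (translate h (p * X i) - p * X i).totalDegree
      = ((translate h p - p) * (X i + C (h i)) + p * C (h i)).totalDegree := by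
        congr 1
        simp only [translate, aeval_eq_bind₁, map_mul, bind₁_X_right]
        ring
    _ ≤ p.totalDegree := (totalDegree_add _ _).trans (max_le hdiff hconst)
    _ < (p * X i).totalDegree := by rw [totalDegree_mul_X hp0]; omega

theorem totalDegree_translate_sub_le (h : σ → R) {P : MvPolynomial σ R} {d : ℕ}
    (hP : P.totalDegree ≤ d + 1) : (translate h P - P).totalDegree ≤ d := by
  rw [P.as_sum, map_sum, ← Finset.sum_sub_distrib]
  refine totalDegree_finsetSum_le fun s hs => ?_
  have hs' := (totalDegree_monomial_le s (P.coeff s)).trans ((le_totalDegree hs).trans hP)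
  rcases translate_monomial_sub_eq_zero_or_totalDegree_lt h s (P.coeff s) with h0 | hlt
  · simp [h0]
  · omega

end MvPolynomial

theorem fwdDiff_step_add {M G : Type*} [AddCommMonoid M] [AddCommGroup G] (u v : M)
    (g : M → G) : Δ_[u + v] g = Δ_[u] g + Δ_[v] g + Δ_[v] (Δ_[u] g) := by
  ext x
  simp only [_root_.fwdDiff, Pi.add_apply, add_assoc, add_comm v u]
  abel

section IsPolyDeg

variable {F : Type} [CommRing F] {n d : ℕ} {f : (Fin n → F) → F}

theorem IsPolyDeg.fwdDiff (hf : IsPolyDeg (d + 1) f) (h : Fin n → F) :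
    IsPolyDeg d (Δ_[h] f) := by
  obtain ⟨P, hPd, hPf⟩ := hf
  exact ⟨translate h P - P, totalDegree_translate_sub_le h hPd,
    fun x => by simp [_root_.fwdDiff, hPf, eval_translate]⟩

theorem IsPolyDeg.fwdDiff_eq_zero (hf : IsPolyDeg 0 f) (h : Fin n → F) : Δ_[h] f = 0 := by
  obtain ⟨P, hPd, hPf⟩ := hf
  rw [totalDegree_eq_zero_iff_eq_C.1 (Nat.le_zero.1 hPd)] at hPf
  ext x
  simp [_root_.fwdDiff, hPf]

end IsPolyDeg

section SmallDirections

variable {p : ℕ} {ι : Type*} [Fintype ι]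

def valSum (b : ι → ZMod p) : ℕ := ∑ i, (b i).val

theorem valSum_add_le (a b : ι → ZMod p) : valSum (a + b) ≤ valSum a + valSum b := by
  rw [valSum, valSum, valSum, ← Finset.sum_add_distrib]
  exact Finset.sum_le_sum fun i _ => ZMod.val_add_le _ _

theorem valSum_single_one_le [DecidableEq ι] (i : ι) :
    valSum (Pi.single i (1 : ZMod p)) ≤ 1 := by
  rw [valSum, Finset.sum_eq_single i (fun j _ hj => by simp [hj]) (by simp), Pi.single_eq_same,
    ZMod.val_one_eq_one_mod]
  exact Nat.mod_le _ _

variable [NeZero p]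

theorem AddSubmonoid.closure_range_single_one [DecidableEq ι] :
    AddSubmonoid.closure (Set.range fun i : ι => Pi.single i (1 : ZMod p)) = ⊤ := by
  refine (eq_top_iff' _).2 fun a => ?_
  rw [← Finset.univ_sum_single a]
  refine AddSubmonoid.sum_mem _ fun i _ => ?_
  rw [← ZMod.natCast_zmod_val (a i), ← nsmul_one, Pi.single_smul]
  exact nsmul_mem (AddSubmonoid.subset_closure (Set.mem_range_self i)) _

theorem fwdDiff_mem_span_fwdDiff_valSum_le {n : ℕ} (L : (ι → ZMod p) →+ (Fin n → ZMod p))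
    {d : ℕ} {f : (Fin n → ZMod p) → ZMod p} (hf : IsPolyDeg d f) (a : ι → ZMod p) :
    Δ_[L a] f ∈ Submodule.span (ZMod p) ((fun b => Δ_[L b] f) '' {b | valSum b ≤ d}) := by
  classical
  induction d generalizing f a with
  | zero => simp [hf.fwdDiff_eq_zero]
  | succ d ih =>
    set S := Submodule.span (ZMod p) ((fun b => Δ_[L b] f) '' {b | valSum b ≤ d + 1})
    have mem_S {b} (hb : valSum b ≤ d + 1) : Δ_[L b] f ∈ S := Submodule.subset_span ⟨b, hb, rfl⟩
    have single_add (i : ι) (b : ι → ZMod p) : Δ_[L (Pi.single i 1 + b)] f =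
        Δ_[L (Pi.single i 1)] f + Δ_[L b] f + Δ_[L b] (Δ_[L (Pi.single i 1)] f) := by
      rw [map_add, fwdDiff_step_add]
    have second_le (i : ι) : Submodule.span (ZMod p)
        ((fun b => Δ_[L b] (Δ_[L (Pi.single i 1)] f)) '' {b | valSum b ≤ d}) ≤ S := by
      rw [Submodule.span_le]
      rintro _ ⟨b, hb : valSum b ≤ d, rfl⟩
      have hsingle := valSum_single_one_le (p := p) i
      have hsum := valSum_add_le (Pi.single i (1 : ZMod p)) b
      change Δ_[L b] (Δ_[L (Pi.single i 1)] f) ∈ S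
      rw [eq_sub_of_add_eq' (single_add i b).symm]
      exact sub_mem (mem_S (by omega)) (add_mem (mem_S (by omega)) (mem_S (by omega)))
    induction a using AddSubmonoid.induction_of_closure_eq_top_left
      (AddSubmonoid.closure_range_single_one (ι := ι) (p := p)) with
    | zero =>
      have hzero : Δ_[(0 : Fin n → ZMod p)] f = 0 := by ext; simp [_root_.fwdDiff]
      simp [hzero]
    | add_left _ hi a ha =>
      obtain ⟨i, rfl⟩ := hi
      rw [single_add]
      exact add_mem (add_mem (mem_S (by have := valSum_single_one_le (p := p) i; omega)) ha)
        (second_le i (ih (hf.fwdDiff _) a))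

end SmallDirections

/-- For a polynomial `f` of degree at most `d` over a prime field and fixed directions
`z_1, …, z_k`, every derivative `D_{a·z} f` is an `F`-linear combination of the derivatives
`D_{b·z} f` over `b ∈ B = {b ∈ F^k : Σ |b_i| ≤ d}`. -/
theorem derivative_in_span_of_small_directions (p : ℕ) [Fact p.Prime] (n d k : ℕ)
    (f : (Fin n → ZMod p) → ZMod p) (hf : IsPolyDeg d f)
    (z : Fin k → Fin n → ZMod p) (a : Fin k → ZMod p) :
    ∃ lam : (Fin k → ZMod p) → ZMod p,
      ∀ x : Fin n → ZMod p,
        f (x + ∑ i, a i • z i) - f x =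
          ∑ b ∈ Finset.univ.filter (fun b : Fin k → ZMod p => ∑ i, (b i).val ≤ d),
            lam b * (f (x + ∑ i, b i • z i) - f x) := by
  have hspan := fwdDiff_mem_span_fwdDiff_valSum_le
    (Fintype.linearCombination (ZMod p) z).toAddMonoidHom hf a
  obtain ⟨lam, hlam⟩ := (Submodule.mem_span_image_finset_iff_exists_fun' (ZMod p)
    (s := Finset.univ.filter fun b : Fin k → ZMod p => ∑ i, (b i).val ≤ d)).1
    (by rw [Finset.coe_filter_univ]; exact hspan)
  refine ⟨lam, fun x => ?_⟩
  simpa [_root_.fwdDiff, Fintype.linearCombination_apply] using (congrFun hlam x).symm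
end

section
/- Strengthening of the Chevalley–Warning theorem for a fixed number of fixed-degree polynomials: Let c, d be positive integers. There exists a constant k = k(c, d), depending only on c and d, such that for every prime finite field F, every n ≥ k, and all polynomials P_1, …, P_c : F^n → F of total degree at most d, if P_1, …, P_c have at least one common zero in F^n, then they have at least |F|^{n−k} common zeros in F^n. -/
/-!
Let `q = |F|`. By Fermat, `∏ᵢ (1 - Pᵢ ^ (q - 1))` is the indicator function of the common zero
set; it has degree at most `c d (q - 1)`, and reducing exponents modulo `q - 1` (keeping them
positive) gives a polynomial `f` with the same values, no larger degree, and degree at most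
`q - 1` in each variable. Such an `f ≠ 0` in `n` variables has at least `q ^ (n - deg f / (q - 1))`
nonzeros: expanding in the first variable with leading coefficient `g` of degree `e ≤ q - 1`,
every nonzero of `g` lifts to at least `q - e` nonzeros of `f`, and `q ^ (q - 1 - e) ≤ (q - e) ^ (q - 1)`
makes the induction close. Hence `k = c d` works.
-/

open MvPolynomial Finset

/-- The representative of `e` in `{1, …, k}` modulo `k`, or `0` if `e = 0`: over a field with
`k + 1` elements, `x ^ e = x ^ reduceExponent k e` for every `x`. -/
def Nat.reduceExponent (k e : ℕ) : ℕ := if e = 0 then 0 else (e - 1) % k + 1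

namespace Nat

theorem add_one_pow_le_succ_mul_pow {m q : ℕ} (h : m ≤ q) : (q + 1) ^ m ≤ (m + 1) * q ^ m := by
  induction m with
  | zero => simp
  | succ m ih =>
    calc (q + 1) ^ (m + 1) = (q + 1) ^ m * (q + 1) := pow_succ _ _
      _ ≤ (m + 1) * q ^ m * (q + 1) := Nat.mul_le_mul_right _ (ih (by omega))
      _ = q ^ m * ((m + 1) * (q + 1)) := by ring
      _ ≤ q ^ m * ((m + 1 + 1) * q) := Nat.mul_le_mul_left _ (by nlinarith)
      _ = (m + 1 + 1) * q ^ (m + 1) := by ring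

theorem add_one_pow_le_add_one_pow {m q : ℕ} (h : m ≤ q) : (q + 1) ^ m ≤ (m + 1) ^ q := by
  induction q, h using Nat.le_induction with
  | base => rfl
  | succ q hmq ih =>
    calc (q + 1 + 1) ^ m ≤ (m + 1) * (q + 1) ^ m := add_one_pow_le_succ_mul_pow (by omega)
      _ ≤ (m + 1) * (m + 1) ^ q := Nat.mul_le_mul_left _ ih
      _ = (m + 1) ^ (q + 1) := (pow_succ' ..).symm

theorem pow_sub_le_of_pow_mul_le {q s n D N : ℕ} (hq : 0 < q) (hs : s ≠ 0) (hN : 0 < N)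
    (h : q ^ (n * s) ≤ N ^ s * q ^ (D * s)) : q ^ (n - D) ≤ N := by
  rcases le_or_gt D n with hDn | hnD
  · rw [← Nat.sub_add_cancel hDn, add_mul, pow_add] at h
    rw [← Nat.pow_le_pow_iff_left hs, ← pow_mul]
    exact Nat.le_of_mul_le_mul_right h (by positivity)
  · rw [Nat.sub_eq_zero_of_le hnD.le, pow_zero]
    exact hN

@[simp] lemma reduceExponent_zero (k : ℕ) : reduceExponent k 0 = 0 := rfl

lemma reduceExponent_le_self (k e : ℕ) : reduceExponent k e ≤ e := by
  unfold reduceExponent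
  split_ifs
  · omega
  · have := Nat.mod_le (e - 1) k
    omega

lemma reduceExponent_le {k : ℕ} (hk : 0 < k) (e : ℕ) : reduceExponent k e ≤ k := by
  unfold reduceExponent
  split_ifs
  · omega
  · have := Nat.mod_lt (e - 1) hk
    omega

end Nat

theorem FiniteField.pow_reduceExponent {K : Type*} [GroupWithZero K] [Fintype K] (x : K) (e : ℕ) :
    x ^ (Fintype.card K - 1).reduceExponent e = x ^ e := by
  rcases eq_or_ne e 0 with rfl | he
  · simp
  have hdiv := Nat.div_add_mod (e - 1) (Fintype.card K - 1)
  rcases eq_or_ne x 0 with rfl | hx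
  · simp [Nat.reduceExponent, he]
  · conv_rhs => rw [show e = (Fintype.card K - 1) * ((e - 1) / (Fintype.card K - 1)) +
      ((e - 1) % (Fintype.card K - 1) + 1) by omega]
    rw [pow_add, pow_mul, FiniteField.pow_card_sub_one_eq_one x hx, one_pow, one_mul,
      Nat.reduceExponent, if_neg he]

namespace MvPolynomial

variable {σ R : Type*} [CommSemiring R]

noncomputable def reduceExponents (k : ℕ) (P : MvPolynomial σ R) : MvPolynomial σ R :=
  ∑ m ∈ P.support,
    monomial (m.mapRange (Nat.reduceExponent k) (Nat.reduceExponent_zero k)) (coeff m P)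

lemma totalDegree_reduceExponents_le (k : ℕ) (P : MvPolynomial σ R) :
    (reduceExponents k P).totalDegree ≤ P.totalDegree := by
  refine (totalDegree_finsetSum _ _).trans (Finset.sup_le fun m hm => ?_)
  refine (totalDegree_monomial_le _ _).trans (le_trans ?_ (le_totalDegree hm))
  rw [Finsupp.sum_mapRange_index (fun _ => rfl)]
  exact sum_le_sum fun i _ => Nat.reduceExponent_le_self k (m i)

lemma degreeOf_reduceExponents_le {k : ℕ} (hk : 0 < k) (P : MvPolynomial σ R) (i : σ) :
    (reduceExponents k P).degreeOf i ≤ k := by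
  classical
  rw [degreeOf_le_iff]
  intro m hm
  rw [mem_support_iff, reduceExponents, coeff_sum] at hm
  obtain ⟨m', -, hm'⟩ := exists_ne_zero_of_sum_ne_zero hm
  rw [coeff_monomial, ite_ne_right_iff] at hm'
  rw [← hm'.1, Finsupp.mapRange_apply]
  exact Nat.reduceExponent_le hk _

lemma eval_reduceExponents {K : Type*} [Field K] [Fintype K] (P : MvPolynomial σ K) (x : σ → K) :
    eval x (reduceExponents (Fintype.card K - 1) P) = eval x P := by
  rw [reduceExponents, map_sum, eval_eq x P]
  refine sum_congr rfl fun m _ => ?_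
  rw [eval_monomial, Finsupp.prod_mapRange_index (fun _ => pow_zero _), Finsupp.prod]
  simp only [FiniteField.pow_reduceExponent]

end MvPolynomial

theorem Fin.card_filter_cons {α : Type*} [Fintype α] {n : ℕ} (p : (Fin (n + 1) → α) → Prop)
    [DecidablePred p] : #{x | p x} = ∑ y : Fin n → α, #{t | p (Fin.cons t y)} := by
  simp only [card_filter]
  rw [← (Fin.consEquiv fun _ => α).sum_comp, Fintype.sum_prod_type_right]
  rfl

theorem Polynomial.card_sub_natDegree_le_card_eval_ne_zero {K : Type*} [CommRing K] [IsDomain K]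
    [Fintype K] [DecidableEq K] {h : Polynomial K} (h0 : h ≠ 0) :
    Fintype.card K - h.natDegree ≤ #{t | h.eval t ≠ 0} := by
  have hroots : #{t | h.eval t = 0} ≤ h.natDegree :=
    card_le_degree_of_subset_roots fun t ht => by simpa [mem_roots h0] using ht
  have := card_filter_add_card_filter_not (s := univ) (fun t => h.eval t = 0)
  rw [card_univ] at this
  simp only [ne_eq]
  omega

namespace MvPolynomial

theorem totalDegree_prod_one_sub_pow_le {σ ι : Type*} {R : Type*} [CommRing R] (s : Finset ι)
    (P : ι → MvPolynomial σ R) (k d : ℕ) (hP : ∀ i ∈ s, (P i).totalDegree ≤ d) :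
    (∏ i ∈ s, (1 - P i ^ k)).totalDegree ≤ #s * d * k := by
  refine (totalDegree_finsetProd _ _).trans ?_
  rw [mul_assoc, ← smul_eq_mul, ← sum_const]
  refine sum_le_sum fun i hi => (totalDegree_sub _ _).trans (max_le (by simp) ?_)
  exact (totalDegree_pow _ _).trans (by rw [mul_comm]; exact Nat.mul_le_mul_right _ (hP i hi))

variable {K : Type*} [Field K] [Fintype K]

theorem eval_prod_one_sub_pow_card_sub_one_ne_zero_iff {σ ι : Type*} (s : Finset ι)
    (P : ι → MvPolynomial σ K) (x : σ → K) :
    eval x (∏ i ∈ s, (1 - P i ^ (Fintype.card K - 1))) ≠ 0 ↔ ∀ i ∈ s, eval x (P i) = 0 := by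
  have hq : Fintype.card K - 1 ≠ 0 := by have := Fintype.one_lt_card (α := K); omega
  simp only [map_prod, map_sub, map_one, map_pow, prod_ne_zero_iff, sub_ne_zero]
  refine forall₂_congr fun i _ => ⟨fun h => ?_, fun h => by simp [h, hq]⟩
  by_contra hx
  exact h (FiniteField.pow_card_sub_one_eq_one _ hx).symm

section

variable [DecidableEq K]

theorem card_sub_natDegree_mul_card_le {n : ℕ} (f : MvPolynomial (Fin (n + 1)) K) :
    (Fintype.card K - (finSuccEquiv K n f).natDegree) *
        #{y | eval y (finSuccEquiv K n f).leadingCoeff ≠ 0} ≤ #{x | eval x f ≠ 0} := by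
  set Q := finSuccEquiv K n f
  have hfiber : ∀ y, eval y Q.leadingCoeff ≠ 0 →
      Fintype.card K - Q.natDegree ≤ #{t | eval (Fin.cons t y) f ≠ 0} := by
    intro y hy
    have hmap : (Q.map (eval y)).coeff Q.natDegree ≠ 0 := by
      rwa [Polynomial.coeff_map]
    simp only [eval_eq_eval_mv_eval']
    exact (Nat.sub_le_sub_left (Polynomial.natDegree_map_le) _).trans
      (Polynomial.card_sub_natDegree_le_card_eval_ne_zero (fun h => hmap (by simp [h])))
  rw [Fin.card_filter_cons, mul_comm, ← smul_eq_mul, ← sum_const]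
  calc ∑ _y ∈ {y | eval y Q.leadingCoeff ≠ 0}, (Fintype.card K - Q.natDegree)
      ≤ ∑ y ∈ {y | eval y Q.leadingCoeff ≠ 0}, #{t | eval (Fin.cons t y) f ≠ 0} :=
        sum_le_sum fun y hy => hfiber y (mem_filter.mp hy).2
    _ ≤ _ := sum_le_sum_of_subset (subset_univ _)

theorem pow_le_card_eval_ne_zero_pow_mul {s : ℕ} (hs : Fintype.card K = s + 1) {n : ℕ}
    (f : MvPolynomial (Fin n) K) (hf : f ≠ 0) (hdeg : ∀ i, f.degreeOf i ≤ s) :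
    (s + 1) ^ (n * s) ≤ #{x | eval x f ≠ 0} ^ s * (s + 1) ^ f.totalDegree := by
  induction n with
  | zero =>
    obtain ⟨a, rfl⟩ := C_surjective (Fin 0) f
    simp [C_ne_zero.mp hf]
  | succ n ih =>
    set Q := finSuccEquiv K n f
    set e := Q.natDegree
    set g := Q.leadingCoeff
    have hQ : Q ≠ 0 := by simpa [Q] using hf
    have hg : g ≠ 0 := Polynomial.leadingCoeff_ne_zero.mpr hQ
    have he : e ≤ s := (natDegree_finSuccEquiv f).trans_le (hdeg 0)
    have hge : g.totalDegree + e ≤ f.totalDegree := totalDegree_coeff_finSuccEquiv_add_le f e hg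
    have ihg := ih g hg fun i => (degreeOf_coeff_finSuccEquiv f i e).trans (hdeg i.succ)
    have hkey : (s + 1) ^ (s - e) ≤ (s + 1 - e) ^ s := by
      simpa [show s - e + 1 = s + 1 - e by omega] using
        Nat.add_one_pow_le_add_one_pow (Nat.sub_le s e)
    calc (s + 1) ^ ((n + 1) * s) = (s + 1) ^ (n * s) * (s + 1) ^ (s - e) * (s + 1) ^ e := by
          rw [mul_assoc, ← pow_add, ← pow_add, Nat.sub_add_cancel he]; ring
      _ ≤ #{y | eval y g ≠ 0} ^ s * (s + 1) ^ g.totalDegree * (s + 1 - e) ^ s * (s + 1) ^ e := by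
          gcongr
      _ = ((s + 1 - e) * #{y | eval y g ≠ 0}) ^ s * (s + 1) ^ (g.totalDegree + e) := by ring
      _ ≤ #{x | eval x f ≠ 0} ^ s * (s + 1) ^ f.totalDegree := by
          gcongr
          · rw [← hs]; exact card_sub_natDegree_mul_card_le f
          · omega

end

theorem card_pow_sub_le_card_common_zeros {ι : Type*} [Fintype ι] {n d : ℕ}
    (P : ι → MvPolynomial (Fin n) K) (hP : ∀ i, (P i).totalDegree ≤ d)
    (hzero : ∃ x, ∀ i, eval x (P i) = 0) :
    Fintype.card K ^ (n - Fintype.card ι * d) ≤ Nat.card {x // ∀ i, eval x (P i) = 0} := by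
  classical
  have hq1 : 1 < Fintype.card K := Fintype.one_lt_card
  have hq : Fintype.card K = Fintype.card K - 1 + 1 := by omega
  -- `f` is the indicator function of the common zeros, with every exponent at most `q - 1`
  set f := reduceExponents (Fintype.card K - 1) (∏ i, (1 - P i ^ (Fintype.card K - 1)))
  have hf : ∀ x, eval x f ≠ 0 ↔ ∀ i, eval x (P i) = 0 := fun x => by
    simpa [f, eval_reduceExponents] using eval_prod_one_sub_pow_card_sub_one_ne_zero_iff univ P x
  obtain ⟨x₀, hx₀⟩ := hzero
  have hf0 : f ≠ 0 := fun h => (hf x₀).mpr hx₀ (by rw [h, map_zero])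
  have hfdeg : f.totalDegree ≤ Fintype.card ι * d * (Fintype.card K - 1) :=
    (totalDegree_reduceExponents_le _ _).trans
      (totalDegree_prod_one_sub_pow_le univ P _ d fun i _ => hP i)
  have hcount := pow_le_card_eval_ne_zero_pow_mul hq f hf0
    (degreeOf_reduceExponents_le (by omega) _)
  rw [← hq] at hcount
  have hN : #{x | eval x f ≠ 0} = #{x | ∀ i, eval x (P i) = 0} := by
    congr 1; exact filter_congr fun x _ => hf x
  rw [Nat.card_eq_fintype_card, Fintype.card_subtype, ← hN]
  have hbound : Fintype.card K ^ (n * (Fintype.card K - 1)) ≤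
      #{x | eval x f ≠ 0} ^ (Fintype.card K - 1) *
        Fintype.card K ^ (Fintype.card ι * d * (Fintype.card K - 1)) :=
    hcount.trans (by gcongr; omega)
  exact Nat.pow_sub_le_of_pow_mul_le (by omega) (by omega)
    (card_pos.mpr ⟨x₀, mem_filter.mpr ⟨mem_univ _, (hf x₀).mpr hx₀⟩⟩) hbound

end MvPolynomial

theorem chevalley_warning_strengthening_general (c d : ℕ) :
    ∃ k : ℕ, ∀ (p : ℕ) [Fact p.Prime] (n : ℕ), k ≤ n →
      ∀ P : Fin c → (Fin n → ZMod p) → ZMod p,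
        (∀ i, IsPolyDeg d (P i)) →
        (∃ x, ∀ i, P i x = 0) →
        p ^ (n - k) ≤ Nat.card {x : Fin n → ZMod p // ∀ i, P i x = 0} := by
  refine ⟨c * d, fun p _ n _ P hP hzero => ?_⟩
  choose Q hQdeg hQ using hP
  obtain rfl : P = fun i x => eval x (Q i) := funext₂ hQ
  simpa using card_pow_sub_le_card_common_zeros Q hQdeg hzero

/-- Strengthening of Chevalley–Warning for a fixed number of fixed-degree polynomials:
there is `k = k(c, d)` such that over any prime field `F` and in any dimension `n ≥ k`,
if `P_1, …, P_c` of degree at most `d` have a common zero, then they have at least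
`|F|^{n-k}` common zeros. -/
theorem chevalley_warning_strengthening (c d : ℕ) (hc : 0 < c) (hd : 0 < d) :
    ∃ k : ℕ, ∀ (p : ℕ) [Fact p.Prime] (n : ℕ), k ≤ n →
      ∀ P : Fin c → (Fin n → ZMod p) → ZMod p,
        (∀ i, IsPolyDeg d (P i)) →
        (∃ x, ∀ i, P i x = 0) →
        p ^ (n - k) ≤ Nat.card {x : Fin n → ZMod p // ∀ i, P i x = 0} :=
  chevalley_warning_strengthening_general c d
end

section
/- Fourier decomposition over the simplex: Let F = F_p be a prime finite field, n ∈ ℕ, and g : F^n → F. For a ∈ F^n, b ∈ F define ℓ_{a,b} : F^n → F by ℓ_{a,b}(x) = ⟨a, x⟩ + b. Then there exist unique real coefficients α_{a,b}, indexed by a ∈ F^n and b ∈ F \ {0}, such that q(g) = Σ_{a ∈ F^n, b ≠ 0} α_{a,b} · q(ℓ_{a,b}) (as functions F^n → ℝ^F). Moreover, these coefficients are given by α_{a,b} = ⟨q(g), q(ℓ_{a,b})⟩ − ⟨q(g), q(ℓ_{a,0})⟩ and satisfy α_{a,b} ∈ [−1, 1]. -/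
/-- The centered simplex embedding `q(f) = p(f) - 1/|F|` of a function `f : F^n → F`. -/
noncomputable def qfun {p n : ℕ} (f : (Fin n → ZMod p) → ZMod p) :
    (Fin n → ZMod p) → ZMod p → ℝ :=
  fun x y => (if f x = y then 1 else 0) - ((p : ℝ))⁻¹

/-- The inner product `⟨u, v⟩ = E_{x ∈ F^n} Σ_{y ∈ F} u(x)_y v(x)_y`. -/
noncomputable def innerE {p n : ℕ} [NeZero p] (u v : (Fin n → ZMod p) → ZMod p → ℝ) : ℝ :=
  (∑ x : Fin n → ZMod p, ∑ y : ZMod p, u x y * v x y) /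
    (Fintype.card (Fin n → ZMod p) : ℝ)

/-- The affine-linear function `ℓ_{a,b}(x) = ⟨a, x⟩ + b`. -/
def affLin {p n : ℕ} (a : Fin n → ZMod p) (b : ZMod p) : (Fin n → ZMod p) → ZMod p :=
  fun x => (∑ i, a i * x i) + b

/-!
If `u : F^n → ℝ^F` has vanishing row sums `Σ_y u(x)_y`, then
`⟨u, q(ℓ_{a,b})⟩ = E_z u(z)_{ℓ_{a,b}(z)}`, and summing `⟨u, q(ℓ_{a,b})⟩ q(ℓ_{a,b})(x)_y` over
all `(a, b)` reduces to `E_z Σ_a u(z)_{⟨a, z - x⟩ + y}`. For `z ≠ x` the form `a ↦ ⟨a, z - x⟩`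
is equidistributed on `F`, so that inner sum is a multiple of the row sum of `u(z)`, which
vanishes; only `z = x` survives and returns `u(x)_y`. Since `Σ_b q(ℓ_{a,b}) = 0`, the `b = 0`
terms can be absorbed into the others, which produces the coefficients
`⟨q(g), q(ℓ_{a,b})⟩ - ⟨q(g), q(ℓ_{a,0})⟩`. Uniqueness follows from
`⟨q(ℓ_{a',b'}), q(ℓ_{a,b})⟩ = [a' = a] ([b' = b] - 1/p)`, and the bound from
`⟨q(f), q(h)⟩ = Pr_x[f x = h x] - 1/p`.
-/

open Finset

theorem AddMonoidHom.sum_comp_eq_zero_of_surjective {G H M : Type*} [AddGroup G] [Fintype G]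
    [AddMonoid H] [Fintype H] [DecidableEq H] [AddCommMonoid M] {φ : G →+ H}
    (hφ : Function.Surjective φ) {f : H → M} (hf : ∑ h, f h = 0) : ∑ g, f (φ g) = 0 :=
  calc ∑ g, f (φ g) = ∑ h, ∑ g with φ g = h, f h := (sum_fiberwise' _ _ _).symm
    _ = ∑ h, #{g | φ g = 0} • f h := by
      simp only [sum_const, AddMonoidHom.card_fiber_eq_of_mem_range φ (hφ _) (hφ 0)]
    _ = 0 := by rw [← smul_sum, hf, smul_zero]

theorem sum_dotProduct_eq_zero {K ι M : Type*} [Field K] [Fintype K] [DecidableEq K]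
    [Fintype ι] [DecidableEq ι] [AddCommMonoid M] {d : ι → K} (hd : d ≠ 0) {f : K → M}
    (hf : ∑ c, f c = 0) : ∑ a : ι → K, f (a ⬝ᵥ d) = 0 := by
  obtain ⟨j, hj⟩ := Function.ne_iff.1 hd
  let φ : (ι → K) →+ K := AddMonoidHom.mk' (· ⬝ᵥ d) fun a b => add_dotProduct a b d
  refine φ.sum_comp_eq_zero_of_surjective (fun c => ⟨Pi.single j (c / d j), ?_⟩) hf
  simp [φ, single_dotProduct, div_mul_cancel₀ _ hj]

theorem Finset.sum_filter_ne_sub_mul {ι R : Type*} [Fintype ι] [DecidableEq ι] [CommRing R]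
    (i₀ : ι) (c v : ι → R) (hv : ∑ i, v i = 0) :
    ∑ i ∈ univ.filter (fun i => i ≠ i₀), (c i - c i₀) * v i = ∑ i, c i * v i := by
  rw [filter_ne', sum_erase _ (by rw [sub_self, zero_mul])]
  simp only [sub_mul, sum_sub_distrib, ← mul_sum, hv, mul_zero, sub_zero]

section

variable {p n : ℕ}

theorem sum_ite_eq_sub_inv [NeZero p] (c : ZMod p) :
    ∑ y : ZMod p, ((if y = c then (1 : ℝ) else 0) - (p : ℝ)⁻¹) = 0 := by
  simp [sum_sub_distrib, NeZero.ne p]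

theorem sum_qfun [NeZero p] (f : (Fin n → ZMod p) → ZMod p) (x : Fin n → ZMod p) :
    ∑ y, qfun f x y = 0 := by
  simp only [qfun, eq_comm (a := f x)]
  exact sum_ite_eq_sub_inv (f x)

theorem sum_qfun_affLin [NeZero p] (a x : Fin n → ZMod p) (y : ZMod p) :
    ∑ b, qfun (affLin a b) x y = 0 := by
  have hcond : ∀ b, affLin a b x = y ↔ b = y - a ⬝ᵥ x := fun b => by
    rw [eq_sub_iff_add_eq', affLin, dotProduct]
  simp only [qfun, hcond]
  exact sum_ite_eq_sub_inv _

theorem sum_comp_add_mul_ite_sub_inv [NeZero p] {w : ZMod p → ℝ} (hw : ∑ c, w c = 0)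
    (s t y : ZMod p) :
    ∑ b, w (s + b) * ((if t + b = y then 1 else 0) - (p : ℝ)⁻¹) = w (s - t + y) := by
  have hshift : ∑ b, w (s + b) = 0 := (Equiv.sum_comp (Equiv.addLeft s) w).trans hw
  have hcond : ∀ b, t + b = y ↔ b = y - t := fun b => by rw [eq_sub_iff_add_eq']
  simp only [mul_sub, mul_ite, mul_one, mul_zero, sum_sub_distrib, ← sum_mul, hshift, hcond,
    sum_ite_eq', mem_univ, if_true, zero_mul, sub_zero]
  congr 1
  ring

theorem innerE_sum_left [NeZero p] {ι : Type*} (s : Finset ι)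
    (w : ι → (Fin n → ZMod p) → ZMod p → ℝ) (v : (Fin n → ZMod p) → ZMod p → ℝ) :
    innerE (fun x y => ∑ i ∈ s, w i x y) v = ∑ i ∈ s, innerE (w i) v := by
  simp only [innerE, sum_mul, ← sum_div]
  congr 1
  conv_lhs => enter [2, x]; rw [sum_comm]
  exact sum_comm

theorem innerE_const_mul_left [NeZero p] (c : ℝ) (w v : (Fin n → ZMod p) → ZMod p → ℝ) :
    innerE (fun x y => c * w x y) v = c * innerE w v := by
  simp only [innerE, mul_assoc, ← mul_sum, mul_div_assoc]

theorem innerE_qfun_right [NeZero p] {u : (Fin n → ZMod p) → ZMod p → ℝ}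
    (hu : ∀ x, ∑ y, u x y = 0) (f : (Fin n → ZMod p) → ZMod p) :
    innerE u (qfun f) = (∑ x, u x (f x)) / Fintype.card (Fin n → ZMod p) := by
  simp only [innerE, qfun, mul_sub, mul_ite, mul_one, mul_zero, sum_sub_distrib, ← sum_mul, hu,
    zero_mul, sub_zero, sum_ite_eq, mem_univ, if_true]

theorem innerE_qfun_qfun [NeZero p] (f h : (Fin n → ZMod p) → ZMod p) :
    innerE (qfun f) (qfun h) =
      #{x | f x = h x} / Fintype.card (Fin n → ZMod p) - (p : ℝ)⁻¹ := by
  have hN : (Fintype.card (Fin n → ZMod p) : ℝ) ≠ 0 := Nat.cast_ne_zero.2 Fintype.card_ne_zero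
  rw [innerE_qfun_right (sum_qfun f)]
  simp only [qfun, sum_sub_distrib, sum_boole, sum_const, card_univ, nsmul_eq_mul]
  field_simp

theorem innerE_qfun_affLin [Fact p.Prime] (a' a : Fin n → ZMod p) (b' b : ZMod p) :
    innerE (qfun (affLin a' b')) (qfun (affLin a b)) =
      if a' = a then (if b' = b then (1 : ℝ) else 0) - (p : ℝ)⁻¹ else 0 := by
  have hN : (Fintype.card (Fin n → ZMod p) : ℝ) ≠ 0 := Nat.cast_ne_zero.2 Fintype.card_ne_zero
  rw [innerE_qfun_right (sum_qfun _)]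
  by_cases ha : a' = a
  · subst ha
    simp only [qfun, affLin, add_right_inj, sum_const, card_univ, nsmul_eq_mul, if_true]
    exact mul_div_cancel_left₀ _ hN
  · rw [if_neg ha]
    have hcond : ∀ x, affLin a' b' x = affLin a b x ↔ x ⬝ᵥ (a' - a) = b - b' := fun x => by
      rw [dotProduct_sub, dotProduct_comm x a', dotProduct_comm x a, sub_eq_sub_iff_add_eq_add,
        affLin, affLin, add_comm b]
      rfl
    simp only [qfun, hcond]
    rw [sum_dotProduct_eq_zero (sub_ne_zero.2 ha) (sum_ite_eq_sub_inv _), zero_div]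

theorem sum_innerE_mul_qfun_affLin [Fact p.Prime] {u : (Fin n → ZMod p) → ZMod p → ℝ}
    (hu : ∀ x, ∑ y, u x y = 0) (x : Fin n → ZMod p) (y : ZMod p) :
    ∑ a, ∑ b, innerE u (qfun (affLin a b)) * qfun (affLin a b) x y = u x y := by
  set N : ℝ := (Fintype.card (Fin n → ZMod p) : ℝ)
  have hN : N ≠ 0 := Nat.cast_ne_zero.2 Fintype.card_ne_zero
  have hb : ∀ z a, ∑ b, u z (affLin a b z) * qfun (affLin a b) x y = u z (a ⬝ᵥ (z - x) + y) :=
    fun z a => by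
      rw [dotProduct_sub]
      exact sum_comp_add_mul_ite_sub_inv (hu z) (a ⬝ᵥ z) (a ⬝ᵥ x) y
  have hz : ∀ z ≠ x, ∑ a, u z (a ⬝ᵥ (z - x) + y) = 0 := fun z hzx =>
    sum_dotProduct_eq_zero (sub_ne_zero.2 hzx) ((Equiv.sum_comp (Equiv.addRight y) _).trans (hu z))
  simp only [innerE_qfun_right hu, sum_div, sum_mul, div_mul_eq_mul_div]
  calc ∑ a, ∑ b, ∑ z, u z (affLin a b z) * qfun (affLin a b) x y / N
      = ∑ z, (∑ a, ∑ b, u z (affLin a b z) * qfun (affLin a b) x y) / N := by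
        simp only [sum_div]
        conv_lhs => enter [2, a]; rw [sum_comm]
        rw [sum_comm]
    _ = ∑ z, (∑ a, u z (a ⬝ᵥ (z - x) + y)) / N := by simp only [hb]
    _ = (∑ a : Fin n → ZMod p, u x y) / N :=
        (sum_eq_single x (fun z _ hzx => by rw [hz z hzx, zero_div]) (by simp)).trans
          (by simp only [sub_self, dotProduct_zero, zero_add])
    _ = u x y := by rw [sum_const, card_univ, nsmul_eq_mul, mul_div_cancel_left₀ _ hN]

theorem eq_sum_innerE_sub_mul_qfun_affLin [Fact p.Prime] {u : (Fin n → ZMod p) → ZMod p → ℝ}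
    (hu : ∀ x, ∑ y, u x y = 0) (x : Fin n → ZMod p) (y : ZMod p) :
    u x y = ∑ a, ∑ b ∈ univ.filter (fun b : ZMod p => b ≠ 0),
      (innerE u (qfun (affLin a b)) - innerE u (qfun (affLin a 0))) * qfun (affLin a b) x y :=
  (sum_innerE_mul_qfun_affLin hu x y).symm.trans <| sum_congr rfl fun a _ =>
    (sum_filter_ne_sub_mul 0 _ _ (sum_qfun_affLin a x y)).symm

theorem innerE_sum_mul_qfun_affLin [Fact p.Prime] (β : (Fin n → ZMod p) → ZMod p → ℝ)
    (s : Finset (ZMod p)) (a : Fin n → ZMod p) (b : ZMod p) :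
    innerE (fun x y => ∑ a', ∑ b' ∈ s, β a' b' * qfun (affLin a' b') x y) (qfun (affLin a b)) =
      ∑ b' ∈ s, β a b' * ((if b' = b then 1 else 0) - (p : ℝ)⁻¹) := by
  simp only [innerE_sum_left, innerE_const_mul_left, innerE_qfun_affLin, mul_ite, mul_zero]
  rw [sum_eq_single a (fun a' _ ha' => by simp only [if_neg ha', sum_const_zero]) (by simp)]
  simp only [if_true]

theorem eq_innerE_sub_of_eq_sum_mul_qfun_affLin [Fact p.Prime]
    {u β : (Fin n → ZMod p) → ZMod p → ℝ}
    (hβ : ∀ x y, u x y = ∑ a, ∑ b ∈ univ.filter (fun b : ZMod p => b ≠ 0),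
      β a b * qfun (affLin a b) x y)
    {a : Fin n → ZMod p} {b : ZMod p} (hb : b ≠ 0) :
    β a b = innerE u (qfun (affLin a b)) - innerE u (qfun (affLin a 0)) := by
  obtain rfl : u = _ := funext fun x => funext fun y => hβ x y
  rw [innerE_sum_mul_qfun_affLin, innerE_sum_mul_qfun_affLin, ← sum_sub_distrib,
    sum_eq_single_of_mem b (by simpa using hb)]
  · simp only [if_true, if_neg hb]
    ring
  · intro b' hb' hne
    simp [hne, (mem_filter.1 hb').2]

theorem innerE_qfun_sub_innerE_qfun_mem_Icc [NeZero p] (g h₁ h₂ : (Fin n → ZMod p) → ZMod p) :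
    innerE (qfun g) (qfun h₁) - innerE (qfun g) (qfun h₂) ∈ Set.Icc (-1 : ℝ) 1 := by
  have hagree : ∀ h : (Fin n → ZMod p) → ZMod p,
      (#{x | g x = h x} : ℝ) / Fintype.card (Fin n → ZMod p) ∈ Set.Icc (0 : ℝ) 1 := fun h =>
    ⟨by positivity, div_le_one_of_le₀ (by exact_mod_cast card_filter_le _ _) (by positivity)⟩
  rw [innerE_qfun_qfun, innerE_qfun_qfun]
  obtain ⟨h0₁, h1₁⟩ := hagree h₁
  obtain ⟨h0₂, h1₂⟩ := hagree h₂
  constructor <;> linarith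

end

/-- Fourier decomposition over the simplex: for every `g : F^n → F` there are unique real
coefficients `α_{a,b}` (`a ∈ F^n`, `b ≠ 0`) with
`q(g) = Σ_{a, b ≠ 0} α_{a,b} q(ℓ_{a,b})`; moreover they are given by
`α_{a,b} = ⟨q(g), q(ℓ_{a,b})⟩ - ⟨q(g), q(ℓ_{a,0})⟩` and lie in `[-1, 1]`. -/
theorem fourier_simplex_decomposition (p : ℕ) [Fact p.Prime] (n : ℕ)
    (g : (Fin n → ZMod p) → ZMod p) :
    ∃ α : (Fin n → ZMod p) → ZMod p → ℝ,
      (∀ x y, qfun g x y =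
        ∑ a : Fin n → ZMod p, ∑ b ∈ Finset.univ.filter (fun b : ZMod p => b ≠ 0),
          α a b * qfun (affLin a b) x y) ∧
      (∀ a : Fin n → ZMod p, ∀ b : ZMod p, b ≠ 0 →
        α a b = innerE (qfun g) (qfun (affLin a b)) - innerE (qfun g) (qfun (affLin a 0))) ∧
      (∀ a : Fin n → ZMod p, ∀ b : ZMod p, b ≠ 0 → α a b ∈ Set.Icc (-1 : ℝ) 1) ∧
      (∀ β : (Fin n → ZMod p) → ZMod p → ℝ,
        (∀ x y, qfun g x y =
          ∑ a : Fin n → ZMod p, ∑ b ∈ Finset.univ.filter (fun b : ZMod p => b ≠ 0),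
            β a b * qfun (affLin a b) x y) →
        ∀ a : Fin n → ZMod p, ∀ b : ZMod p, b ≠ 0 → β a b = α a b) :=
  ⟨fun a b => innerE (qfun g) (qfun (affLin a b)) - innerE (qfun g) (qfun (affLin a 0)),
    eq_sum_innerE_sub_mul_qfun_affLin (sum_qfun g),
    fun _ _ _ => rfl,
    fun _ _ _ => innerE_qfun_sub_innerE_qfun_mem_Icc g _ _,
    fun _ hβ _ _ hb => eq_innerE_sub_of_eq_sum_mul_qfun_affLin hβ hb⟩
end

section
/- Weak regularity on the simplex: Let ε > 0, let X and Y be finite nonempty sets, let φ : X → Δ(Y), and let F be a collection of functions from X to Y. Then there exist f_1, …, f_c ∈ F with c ≤ 1/ε², and real coefficients α_1, …, α_c ∈ [−1, 1], such that the function h : X → ℝ^Y defined by h = φ − 1/|Y| − Σ_{i=1}^c α_i q(f_i) satisfies |⟨h, q(f)⟩| ≤ ε for every f ∈ F. -/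
/-- The centered simplex embedding `q(f) = p(f) - 1/|Y|` of a function `f : X → Y`. -/
noncomputable def qfunXY {X Y : Type} [Fintype Y] [DecidableEq Y] (f : X → Y) :
    X → Y → ℝ :=
  fun x y => (if f x = y then 1 else 0) - ((Fintype.card Y : ℝ))⁻¹

/-- The inner product `⟨u, v⟩ = E_{x ∈ X} Σ_{y ∈ Y} u(x)_y v(x)_y`. -/
noncomputable def innerXY {X Y : Type} [Fintype X] [Fintype Y] (u v : X → Y → ℝ) : ℝ :=
  (∑ x : X, ∑ y : Y, u x y * v x y) / (Fintype.card X : ℝ)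

lemma sum_sq_centered_le_one {Y : Type} [Fintype Y] [Nonempty Y]
    (φ : Y → ℝ) (h0 : ∀ y, 0 ≤ φ y) (h1 : ∑ y : Y, φ y = 1) :
    ∑ y : Y, (φ y - (Fintype.card Y : ℝ)⁻¹) * (φ y - (Fintype.card Y : ℝ)⁻¹) ≤ 1 := by
  have hk : (0:ℝ) < (Fintype.card Y : ℝ) := by
    exact_mod_cast Fintype.card_pos
  set c : ℝ := (Fintype.card Y : ℝ)⁻¹ with hc
  have hexp : ∑ y : Y, (φ y - c) * (φ y - c)
      = (∑ y : Y, φ y * φ y) - 2 * c * (∑ y : Y, φ y) + (Fintype.card Y : ℝ) * c ^ 2 := by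
    rw [Finset.sum_congr rfl (fun y _ => by ring_nf :
      ∀ y ∈ Finset.univ, (φ y - c) * (φ y - c) = φ y * φ y - 2 * c * φ y + c ^ 2)]
    rw [Finset.sum_add_distrib, Finset.sum_sub_distrib, ← Finset.mul_sum, Finset.sum_const,
      Finset.card_univ, nsmul_eq_mul]
  have hsq : ∑ y : Y, φ y * φ y ≤ 1 := by
    calc ∑ y : Y, φ y * φ y ≤ ∑ y : Y, φ y := by
          apply Finset.sum_le_sum
          intro y _
          have : φ y ≤ 1 := by
            rw [← h1]
            exact Finset.single_le_sum (fun z _ => h0 z) (Finset.mem_univ y)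
          nlinarith [h0 y]
      _ = 1 := h1
  have hc2 : (Fintype.card Y : ℝ) * c ^ 2 = c := by
    rw [hc, pow_two, ← mul_assoc, mul_inv_cancel₀ hk.ne', one_mul]
  rw [hexp, h1, hc2]
  have : 0 ≤ c := by positivity
  nlinarith

lemma innerXY_nonneg {X Y : Type} [Fintype X] [Fintype Y] (u : X → Y → ℝ) :
    0 ≤ innerXY u u := by
  unfold innerXY
  apply div_nonneg
  · apply Finset.sum_nonneg; intro x _
    apply Finset.sum_nonneg; intro y _
    exact mul_self_nonneg _
  · positivity

lemma innerXY_centered_le_one {X Y : Type} [Fintype X] [Fintype Y] [Nonempty X] [Nonempty Y]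
    (φ : X → Y → ℝ) (h0 : ∀ x y, 0 ≤ φ x y) (h1 : ∀ x, ∑ y : Y, φ x y = 1) :
    innerXY (fun x y => φ x y - (Fintype.card Y : ℝ)⁻¹)
      (fun x y => φ x y - (Fintype.card Y : ℝ)⁻¹) ≤ 1 := by
  have hX : (0:ℝ) < (Fintype.card X : ℝ) := by exact_mod_cast Fintype.card_pos
  unfold innerXY
  rw [div_le_one hX]
  calc ∑ x : X, ∑ y : Y, (φ x y - (Fintype.card Y : ℝ)⁻¹) * (φ x y - (Fintype.card Y : ℝ)⁻¹)
      ≤ ∑ _x : X, (1:ℝ) := by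
        apply Finset.sum_le_sum
        intro x _
        exact sum_sq_centered_le_one (φ x) (h0 x) (h1 x)
    _ = (Fintype.card X : ℝ) := by simp
  
lemma innerXY_q_le_one {X Y : Type} [Fintype X] [Fintype Y] [DecidableEq Y]
    [Nonempty X] [Nonempty Y] (f : X → Y) :
    innerXY (qfunXY f) (qfunXY f) ≤ 1 := by
  have := innerXY_centered_le_one (X := X) (Y := Y)
    (fun x y => if f x = y then (1:ℝ) else 0)
    (fun x y => by positivity)
    (fun x => by simp)
  exact this

lemma innerXY_cauchy {X Y : Type} [Fintype X] [Fintype Y] [Nonempty X] (u v : X → Y → ℝ) :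
    (innerXY u v) ^ 2 ≤ innerXY u u * innerXY v v := by
  have hX : (0:ℝ) < (Fintype.card X : ℝ) := by
    exact_mod_cast Fintype.card_pos
  unfold innerXY
  rw [div_pow, div_mul_div_comm, ← sq]
  apply div_le_div_of_nonneg_right ?_ (by positivity)
  have key := Finset.sum_mul_sq_le_sq_mul_sq (Finset.univ : Finset (X × Y))
    (fun p => u p.1 p.2) (fun p => v p.1 p.2)
  have e1 : ∑ x : X, ∑ y : Y, u x y * v x y = ∑ p : X × Y, u p.1 p.2 * v p.1 p.2 := by
    rw [Fintype.sum_prod_type]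
  have e2 : ∑ x : X, ∑ y : Y, u x y * u x y = ∑ p : X × Y, (u p.1 p.2) ^ 2 := by
    rw [Fintype.sum_prod_type]; simp [sq]
  have e3 : ∑ x : X, ∑ y : Y, v x y * v x y = ∑ p : X × Y, (v p.1 p.2) ^ 2 := by
    rw [Fintype.sum_prod_type]; simp [sq]
  rw [e1, e2, e3]
  exact key

lemma innerXY_sub_smul {X Y : Type} [Fintype X] [Fintype Y]
    (g q : X → Y → ℝ) (a : ℝ) :
    innerXY (fun x y => g x y - a * q x y) (fun x y => g x y - a * q x y)
      = innerXY g g - 2 * a * innerXY g q + a ^ 2 * innerXY q q := by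
  have hnum : ∑ x : X, ∑ y : Y, (g x y - a * q x y) * (g x y - a * q x y)
      = (∑ x : X, ∑ y : Y, g x y * g x y) - 2 * a * (∑ x : X, ∑ y : Y, g x y * q x y)
        + a ^ 2 * (∑ x : X, ∑ y : Y, q x y * q x y) := by
    have expand : ∀ x y, (g x y - a * q x y) * (g x y - a * q x y)
        = g x y * g x y - 2 * a * (g x y * q x y) + a ^ 2 * (q x y * q x y) :=
      fun x y => by ring
    simp only [expand, Finset.sum_add_distrib, Finset.sum_sub_distrib, ← Finset.mul_sum]
  simp only [innerXY]
  rw [hnum]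
  ring

lemma weak_reg_aux {X Y : Type} [Fintype X] [Fintype Y] [DecidableEq Y]
    [Nonempty X] [Nonempty Y] (ε : ℝ) (hε : 0 < ε) (Fam : Set (X → Y)) :
    ∀ (n : ℕ) (g : X → Y → ℝ), innerXY g g ≤ n * ε ^ 2 →
    ∃ (c : ℕ) (f : Fin c → X → Y) (α : Fin c → ℝ),
      (c : ℝ) * ε ^ 2 ≤ innerXY g g ∧ (∀ i, f i ∈ Fam) ∧ (∀ i, |α i| ≤ ε) ∧
      ∀ f' ∈ Fam,
        |innerXY (fun x y => g x y - ∑ i, α i * qfunXY (f i) x y) (qfunXY f')| ≤ ε := by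
  intro n
  induction n with
  | zero =>
    intro g hg
    refine ⟨0, Fin.elim0, Fin.elim0, by simpa using innerXY_nonneg g,
      fun i => i.elim0, fun i => i.elim0, ?_⟩
    intro f' hf'
    by_contra hcon
    push_neg at hcon
    have hcs := innerXY_cauchy g (qfunXY f')
    have hq1 := innerXY_q_le_one (X := X) f'
    have hg0 := innerXY_nonneg g
    have : ε ^ 2 < innerXY g g := by
      have h1 : ε < |innerXY (fun x y => g x y - ∑ i : Fin 0, Fin.elim0 i * qfunXY (Fin.elim0 i) x y) (qfunXY f')| := hcon
      have h2 : (fun x y => g x y - ∑ i : Fin 0, Fin.elim0 i * qfunXY (Fin.elim0 i) x y) = g := by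
        funext x y; simp
      rw [h2] at h1
      nlinarith [abs_nonneg (innerXY g (qfunXY f')), sq_abs (innerXY g (qfunXY f'))]
    simp at hg
    nlinarith
  | succ m ih =>
    intro g hg
    by_cases hall : ∀ f' ∈ Fam, |innerXY g (qfunXY f')| ≤ ε
    · refine ⟨0, Fin.elim0, Fin.elim0, by simpa using innerXY_nonneg g,
        fun i => i.elim0, fun i => i.elim0, ?_⟩
      intro f' hf'
      have h2 : (fun x y => g x y - ∑ i : Fin 0, Fin.elim0 i * qfunXY (Fin.elim0 i) x y) = g := by
        funext x y; simp
      rw [h2]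
      exact hall f' hf'
    · push_neg at hall
      obtain ⟨f₀, hf₀, hbig⟩ := hall
      set σ : ℝ := if 0 ≤ innerXY g (qfunXY f₀) then 1 else -1 with hσ
      have hσ1 : σ * innerXY g (qfunXY f₀) = |innerXY g (qfunXY f₀)| := by
        rcases le_or_gt 0 (innerXY g (qfunXY f₀)) with h | h
        · rw [hσ, if_pos h, one_mul, abs_of_nonneg h]
        · rw [hσ, if_neg (not_le.mpr h), abs_of_neg h]; ring
      have hσsq : σ ^ 2 = 1 := by
        rcases le_or_gt 0 (innerXY g (qfunXY f₀)) with h | h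
        · rw [hσ, if_pos h]; norm_num
        · rw [hσ, if_neg (not_le.mpr h)]; norm_num
      set a : ℝ := σ * ε with ha
      set g' : X → Y → ℝ := fun x y => g x y - a * qfunXY f₀ x y with hg'
      have henergy : innerXY g' g' ≤ innerXY g g - ε ^ 2 := by
        rw [hg', innerXY_sub_smul]
        have hq1 := innerXY_q_le_one (X := X) f₀
        have hq0 := innerXY_nonneg (qfunXY f₀ : X → Y → ℝ)
        have h2a : 2 * a * innerXY g (qfunXY f₀) = 2 * ε * |innerXY g (qfunXY f₀)| := by
          rw [ha]; rw [← hσ1]; ring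
        have ha2 : a ^ 2 = ε ^ 2 := by rw [ha, mul_pow, hσsq, one_mul]
        rw [h2a, ha2]
        nlinarith
      have hg'le : innerXY g' g' ≤ m * ε ^ 2 := by
        have : innerXY g g ≤ (m + 1) * ε ^ 2 := by push_cast at hg ⊢; linarith
        linarith
      obtain ⟨c, f, α, hcE, hfF, hα, hres⟩ := ih g' hg'le
      refine ⟨c + 1, Fin.cons f₀ f, Fin.cons a α, ?_, ?_, ?_, ?_⟩
      · have : (c : ℝ) * ε ^ 2 ≤ innerXY g' g' := hcE
        push_cast
        linarith
      · intro i
        refine Fin.cases ?_ ?_ i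
        · simpa using hf₀
        · intro j; simpa using hfF j
      · intro i
        refine Fin.cases ?_ ?_ i
        · simp only [Fin.cons_zero, ha]
          rw [abs_mul]
          have : |σ| = 1 := by
            rcases le_or_gt 0 (innerXY g (qfunXY f₀)) with h | h
            · rw [hσ, if_pos h]; simp
            · rw [hσ, if_neg (not_le.mpr h)]; simp
          rw [this, one_mul, abs_of_pos hε]
        · intro j; simpa using hα j
      · intro f' hf'
        have hfun : (fun x y => g x y - ∑ i : Fin (c+1),
              (Fin.cons a α : Fin (c+1) → ℝ) i * qfunXY ((Fin.cons f₀ f : Fin (c+1) → X → Y) i) x y)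
            = fun x y => g' x y - ∑ i : Fin c, α i * qfunXY (f i) x y := by
          funext x y
          rw [Fin.sum_univ_succ]
          simp only [Fin.cons_succ, Fin.cons_zero, hg']
          ring
        rw [hfun]
        exact hres f' hf'


/-- Weak regularity on the simplex: for any `φ : X → Δ(Y)` and any collection `Fam` of
functions `X → Y`, there are `c ≤ 1/ε²` functions `f_1, …, f_c ∈ Fam` and coefficients
`α_i ∈ [-1, 1]` such that `h = φ - 1/|Y| - Σ α_i q(f_i)` satisfies `|⟨h, q(f)⟩| ≤ ε` for
every `f ∈ Fam`. -/
theorem weak_regularity_simplex {X Y : Type} [Fintype X] [Fintype Y] [DecidableEq Y]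
    [Nonempty X] [Nonempty Y] (ε : ℝ) (hε : 0 < ε)
    (φ : X → Y → ℝ) (hφ0 : ∀ x y, 0 ≤ φ x y) (hφ1 : ∀ x, ∑ y : Y, φ x y = 1)
    (Fam : Set (X → Y)) :
    ∃ (c : ℕ) (f : Fin c → X → Y) (α : Fin c → ℝ),
      (c : ℝ) ≤ 1 / ε ^ 2 ∧ (∀ i, f i ∈ Fam) ∧ (∀ i, |α i| ≤ 1) ∧
      ∀ f' ∈ Fam,
        |innerXY
            (fun x y => φ x y - (Fintype.card Y : ℝ)⁻¹ - ∑ i, α i * qfunXY (f i) x y)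
            (qfunXY f')| ≤ ε := by
  set g₀ : X → Y → ℝ := fun x y => φ x y - (Fintype.card Y : ℝ)⁻¹ with hg₀
  have hE : innerXY g₀ g₀ ≤ 1 := innerXY_centered_le_one φ hφ0 hφ1
  have hε2 : (0:ℝ) < ε ^ 2 := by positivity
  set n : ℕ := Nat.ceil (1 / ε ^ 2) with hn
  have hnE : innerXY g₀ g₀ ≤ n * ε ^ 2 := by
    have h1 : (1 / ε ^ 2 : ℝ) ≤ n := Nat.le_ceil _
    have : (1:ℝ) ≤ n * ε ^ 2 := by
      rw [div_le_iff₀ hε2] at h1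
      linarith
    linarith
  obtain ⟨c, f, α, hcE, hfF, hα, hres⟩ := weak_reg_aux ε hε Fam n g₀ hnE
  have hcbound : (c : ℝ) ≤ 1 / ε ^ 2 := by
    rw [le_div_iff₀ hε2]
    linarith
  refine ⟨c, f, α, hcbound, hfF, ?_, ?_⟩
  · intro i
    rcases le_or_gt ε 1 with h | h
    · exact le_trans (hα i) h
    · exfalso
      have hc0 : (c:ℝ) < 1 := by
        have : (1:ℝ) / ε ^ 2 < 1 := by
          rw [div_lt_one hε2]; nlinarith
        linarith
      have : c = 0 := by exact_mod_cast Nat.lt_one_iff.mp (by exact_mod_cast hc0)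
      subst this
      exact i.elim0
  · intro f' hf'
    exact hres f' hf'
end
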